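/- Balance identity and kinetic bound for the logarithmic system: if (u, m, H̄) is a classical solution of the logarithmic ergodic MFG system, then ∫_Q [ ½|∇u|²(m+1) + (m−1)v + (m log m − log m) ] dy = 0, and consequently (since m log m ≥ log m for m > 0) ∫_Q ½|∇u|²(m+1) dy ≤ ∫_Q v(y) dy. -/

import Mathlib

open MeasureTheory Real

/-- Partial derivative in direction `i`. -/
noncomputable def pd {n : ℕ} (i : Fin n) (f : (Fin n → ℝ) → ℝ) (x : Fin n → ℝ) : ℝ :=
  fderiv ℝ f x (Pi.single i 1)

/-- Laplacian: sum of second partial derivatives. -/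
noncomputable def lap {n : ℕ} (f : (Fin n → ℝ) → ℝ) (x : Fin n → ℝ) : ℝ :=
  ∑ i, pd i (pd i f) x

/-- Divergence of a vector field. -/
noncomputable def dvg {n : ℕ} (F : (Fin n → ℝ) → Fin n → ℝ) (x : Fin n → ℝ) : ℝ :=
  ∑ i, pd i (fun y => F y i) x

/-- `ℤⁿ`-periodicity. -/
def ZPeriodic {n : ℕ} (f : (Fin n → ℝ) → ℝ) : Prop :=
  ∀ (k : Fin n → ℤ) (x : Fin n → ℝ), f (x + fun i => (k i : ℝ)) = f x

/-- The unit cube `Q = [0,1]ⁿ`. -/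
def unitCube (n : ℕ) : Set (Fin n → ℝ) := Set.Icc 0 1

/-- A classical solution `(u, m, H)` of the logarithmic ergodic MFG system
`-Δu + ½|∇u+P|² - v - log m = H`, `-Δm - div(m(∇u+P)) = 0`, `∫ u = 0`, `∫ m = 1`. -/
structure LogMFG {n : ℕ} (v : (Fin n → ℝ) → ℝ) (P : Fin n → ℝ)
    (u m : (Fin n → ℝ) → ℝ) (H : ℝ) : Prop where
  hu : ContDiff ℝ 2 u
  hm : ContDiff ℝ 2 m
  hup : ZPeriodic u
  hmp : ZPeriodic m
  hmpos : ∀ x, 0 < m x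
  hHJB : ∀ x, -lap u x + (∑ i, (pd i u x + P i) ^ 2) / 2 - v x - Real.log (m x) = H
  hFP : ∀ x, -lap m x - dvg (fun y j => m y * (pd j u y + P j)) x = 0
  humean : (∫ y in unitCube n, u y) = 0
  hmmean : (∫ y in unitCube n, m y) = 1

section Aux

lemma pd_continuous {n : ℕ} {f : (Fin n → ℝ) → ℝ} (hf : ContDiff ℝ 1 f) (i : Fin n) :
    Continuous (pd i f) :=
  (ContinuousLinearMap.apply ℝ ℝ (Pi.single i 1)).continuous.comp
    (hf.fderiv_right (m := 0) (by norm_num)).continuous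

lemma cast_single {n : ℕ} (j : Fin n) :
    (fun p => (((Pi.single j 1 : Fin n → ℤ) p : ℤ) : ℝ)) = Pi.single j (1:ℝ) := by
  funext p
  rcases eq_or_ne p j with rfl | hp
  · simp
  · simp [Pi.single_eq_of_ne hp]

lemma insertNth_one_eq {k : ℕ} (i : Fin (k+1)) (x : Fin k → ℝ) :
    (i.insertNth (1:ℝ) x : Fin (k+1) → ℝ) = i.insertNth (0:ℝ) x + Pi.single i 1 := by
  funext j
  refine Fin.succAboveCases i ?_ ?_ j
  · simp
  · intro p
    simp [Fin.insertNth_apply_succAbove, Pi.single_eq_of_ne (Fin.succAbove_ne i p)]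

lemma integral_pd_eq_zero {k : ℕ} (g : (Fin (k+1) → ℝ) → ℝ) (hg : ContDiff ℝ 1 g)
    (hgp : ZPeriodic g) (i : Fin (k+1)) :
    ∫ y in unitCube (k+1), pd i g y = 0 := by
  have hd : Differentiable ℝ g := hg.differentiable one_ne_zero
  have hs : (fun x => ∑ j : Fin (k+1), (if j = i then fderiv ℝ g x else 0) (Pi.single j 1))
      = pd i g := by
    funext x
    rw [Finset.sum_eq_single i]
    · simp [pd]
    · intro b _ hb; simp [hb]
    · simp
  have key := integral_divergence_of_hasFDerivAt_off_countable' (a := (0 : Fin (k+1) → ℝ)) (b := 1)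
    (by intro j; norm_num)
    (fun j x => if j = i then g x else 0)
    (fun j x => if j = i then fderiv ℝ g x else 0)
    ∅ Set.countable_empty
    (fun j => by
      rcases eq_or_ne j i with rfl | hj
      · simpa using hg.continuous.continuousOn
      · simp [hj, continuousOn_const])
    (fun x _ j => by
      rcases eq_or_ne j i with rfl | hj
      · simpa using (hd x).hasFDerivAt
      · simpa [hj] using hasFDerivAt_const (0:ℝ) x)
    (by rw [hs]; exact (pd_continuous hg i).integrableOn_Icc)
  rw [hs] at key
  rw [unitCube, key]
  apply Finset.sum_eq_zero
  intro j _
  rcases eq_or_ne j i with rfl | hj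
  · simp only [if_pos rfl, Pi.one_apply, Pi.zero_apply]
    have hper : ∀ x : Fin k → ℝ, g (j.insertNth (1:ℝ) x) = g (j.insertNth (0:ℝ) x) := by
      intro x
      rw [insertNth_one_eq]
      have := hgp (Pi.single j 1) (j.insertNth (0:ℝ) x)
      rwa [cast_single] at this
    simp only [hper, sub_self]
  · simp [hj]

lemma fderiv_comp_add {n : ℕ} (f : (Fin n → ℝ) → ℝ) (hf : Differentiable ℝ f)
    (c x : Fin n → ℝ) : fderiv ℝ (fun y => f (y + c)) x = fderiv ℝ f (x + c) := by
  have h1 : HasFDerivAt (fun y : (Fin n → ℝ) => y + c)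
      (ContinuousLinearMap.id ℝ (Fin n → ℝ)) x := (hasFDerivAt_id x).add_const c
  have h2 := (hf (x + c)).hasFDerivAt.comp x h1
  exact h2.fderiv

lemma ZPeriodic.pd_per {n : ℕ} {f : (Fin n → ℝ) → ℝ} (hp : ZPeriodic f)
    (hf : Differentiable ℝ f) (i : Fin n) : ZPeriodic (pd i f) := by
  intro k x
  have hc : (fun y => f (y + fun j => (k j : ℝ))) = f := funext fun y => hp k y
  unfold pd
  rw [← fderiv_comp_add f hf, hc]

lemma ZPeriodic.mul {n : ℕ} {f g : (Fin n → ℝ) → ℝ} (hf : ZPeriodic f) (hg : ZPeriodic g) :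
    ZPeriodic (fun y => f y * g y) := fun k x => by simp [hf k x, hg k x]

lemma ZPeriodic.add' {n : ℕ} {f g : (Fin n → ℝ) → ℝ} (hf : ZPeriodic f) (hg : ZPeriodic g) :
    ZPeriodic (fun y => f y + g y) := fun k x => by simp [hf k x, hg k x]

lemma ZPeriodic.const' {n : ℕ} (c : ℝ) : ZPeriodic (fun _ : Fin n → ℝ => c) := fun _ _ => rfl

lemma pd_mul {n : ℕ} {f g : (Fin n → ℝ) → ℝ} {x : Fin n → ℝ} (i : Fin n)
    (hf : DifferentiableAt ℝ f x) (hg : DifferentiableAt ℝ g x) :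
    pd i (fun y => f y * g y) x = pd i f x * g x + f x * pd i g x := by
  unfold pd
  rw [fderiv_fun_mul hf hg]
  simp only [ContinuousLinearMap.add_apply, ContinuousLinearMap.smul_apply, smul_eq_mul]
  ring

lemma pd_add {n : ℕ} {f g : (Fin n → ℝ) → ℝ} {x : Fin n → ℝ} (i : Fin n)
    (hf : DifferentiableAt ℝ f x) (hg : DifferentiableAt ℝ g x) :
    pd i (fun y => f y + g y) x = pd i f x + pd i g x := by
  unfold pd
  rw [fderiv_fun_add hf hg]; simp

lemma pd_contDiff {n : ℕ} {f : (Fin n → ℝ) → ℝ} (hf : ContDiff ℝ 2 f) (i : Fin n) :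
    ContDiff ℝ 1 (pd i f) := by
  have h := (ContinuousLinearMap.apply ℝ ℝ (Pi.single i 1)).contDiff.comp
    (hf.fderiv_right (m := 1) (by norm_num))
  unfold pd
  exact h

end Aux

/-- Balance identity and kinetic bound for the logarithmic system. -/
theorem log_mfg_balance_and_kinetic {n : ℕ} (hn : 1 ≤ n)
    (v : (Fin n → ℝ) → ℝ) (hv0 : ∀ x, 0 ≤ v x) (hvlip : ∃ K, LipschitzWith K v) (hvper : ZPeriodic v)
    (P : Fin n → ℝ) (u m : (Fin n → ℝ) → ℝ) (H : ℝ)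
    (h : LogMFG v P u m H) :
    (∫ y in unitCube n,
        ((∑ i, (pd i u y) ^ 2) / 2 * (m y + 1) + (m y - 1) * v y
          + (m y * Real.log (m y) - Real.log (m y)))) = 0
    ∧ (∫ y in unitCube n, (∑ i, (pd i u y) ^ 2) / 2 * (m y + 1))
        ≤ ∫ y in unitCube n, v y := by
  obtain ⟨k, rfl⟩ : ∃ k, n = k + 1 := ⟨n - 1, (Nat.succ_pred_eq_of_pos hn).symm⟩
  obtain ⟨hu, hm, hup, hmp, hmpos, hHJB, hFP, humean, hmmean⟩ := h
  set Q := unitCube (k+1) with hQ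
  have hQm : MeasurableSet Q := measurableSet_Icc
  have hu1 : ContDiff ℝ 1 u := hu.of_le (by norm_num)
  have hm1 : ContDiff ℝ 1 m := hm.of_le (by norm_num)
  have du : Differentiable ℝ u := hu1.differentiable one_ne_zero
  have dm : Differentiable ℝ m := hm1.differentiable one_ne_zero
  have cu : Continuous u := hu1.continuous
  have cm : Continuous m := hm1.continuous
  obtain ⟨K, hK⟩ := hvlip
  have cv : Continuous v := hK.continuous
  have clog : Continuous fun y => Real.log (m y) := cm.log fun x => (hmpos x).ne'
  have hpdu : ∀ i, ContDiff ℝ 1 (pd i u) := pd_contDiff hu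
  have hpdm : ∀ i, ContDiff ℝ 1 (pd i m) := pd_contDiff hm
  have cpdu : ∀ i, Continuous (pd i u) := fun i => (hpdu i).continuous
  have cpdm : ∀ i, Continuous (pd i m) := fun i => (hpdm i).continuous
  have dpdu : ∀ i, Differentiable ℝ (pd i u) := fun i => (hpdu i).differentiable one_ne_zero
  have dpdm : ∀ i, Differentiable ℝ (pd i m) := fun i => (hpdm i).differentiable one_ne_zero
  have ppdu : ∀ i, ZPeriodic (pd i u) := fun i => hup.pd_per du i
  have ppdm : ∀ i, ZPeriodic (pd i m) := fun i => hmp.pd_per dm i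
  have cpp : ∀ i : Fin (k+1), Continuous (pd i (pd i u)) := fun i => pd_continuous (hpdu i) i
  have clap : Continuous (lap u) := by
    have : Continuous fun x => ∑ i : Fin (k+1), pd i (pd i u) x :=
      continuous_finset_sum _ (fun i _ => cpp i)
    exact this
  have hio : ∀ {f : (Fin (k+1) → ℝ) → ℝ}, Continuous f → IntegrableOn f Q volume :=
    fun hf => hf.integrableOn_Icc
  have vol1 : (volume Q).toReal = 1 := by
    simp [hQ, unitCube, Real.volume_Icc_pi]
  -- zero-integral facts
  have h1 : ∀ i, ∫ y in Q, pd i u y = 0 := fun i => integral_pd_eq_zero u hu1 hup i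
  have h2 : ∫ y in Q, lap u y = 0 := by
    have e : ∫ y in Q, lap u y = ∑ i : Fin (k+1), ∫ y in Q, pd i (pd i u) y :=
      integral_finset_sum _ (fun i _ => hio (cpp i))
    rw [e]
    exact Finset.sum_eq_zero fun i _ =>
      integral_pd_eq_zero (pd i u) (hpdu i) (ppdu i) i
  -- the two divergence fields
  have hGi1 : ∀ i : Fin (k+1), ContDiff ℝ 1 (fun z => m z * pd i u z) :=
    fun i => hm1.mul (hpdu i)
  have hGi2cd : ∀ i : Fin (k+1),
      ContDiff ℝ 1 (fun z => u z * (pd i m z + m z * (pd i u z + P i))) :=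
    fun i => hu1.mul ((hpdm i).add (hm1.mul ((hpdu i).add contDiff_const)))
  have hGi1p : ∀ i : Fin (k+1), ZPeriodic (fun z => m z * pd i u z) :=
    fun i => hmp.mul (ppdu i)
  have hGi2p : ∀ i : Fin (k+1),
      ZPeriodic (fun z => u z * (pd i m z + m z * (pd i u z + P i))) :=
    fun i => hup.mul ((ppdm i).add' (hmp.mul ((ppdu i).add' (ZPeriodic.const' (P i)))))
  have hD1 : ∀ i : Fin (k+1), ∫ y in Q, pd i (fun z => m z * pd i u z) y = 0 :=
    fun i => integral_pd_eq_zero _ (hGi1 i) (hGi1p i) i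
  have hD2 : ∀ i : Fin (k+1),
      ∫ y in Q, pd i (fun z => u z * (pd i m z + m z * (pd i u z + P i))) y = 0 :=
    fun i => integral_pd_eq_zero _ (hGi2cd i) (hGi2p i) i
  -- pointwise product-rule expansions
  have ed1 : ∀ (i : Fin (k+1)) y, pd i (fun z => m z * pd i u z) y
      = pd i m y * pd i u y + m y * pd i (pd i u) y :=
    fun i y => pd_mul i (dm y) (dpdu i y)
  have dInner : ∀ i : Fin (k+1),
      Differentiable ℝ (fun z => pd i m z + m z * (pd i u z + P i)) :=
    fun i => (dpdm i).add (dm.mul ((dpdu i).add (differentiable_const _)))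
  have e2a : ∀ (i : Fin (k+1)) y,
      pd i (fun z => u z * (pd i m z + m z * (pd i u z + P i))) y
      = pd i u y * (pd i m y + m y * (pd i u y + P i))
        + u y * pd i (fun z => pd i m z + m z * (pd i u z + P i)) y :=
    fun i y => pd_mul i (du y) (dInner i y)
  have e2b : ∀ (i : Fin (k+1)) y,
      pd i (fun z => pd i m z + m z * (pd i u z + P i)) y
      = pd i (pd i m) y + pd i (fun z => m z * (pd i u z + P i)) y :=
    fun i y => pd_add i (dpdm i y) ((dm.mul ((dpdu i).add (differentiable_const _))) y)
  have hFP' : ∀ y, ∑ i : Fin (k+1),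
      (pd i (pd i m) y + pd i (fun z => m z * (pd i u z + P i)) y) = 0 := by
    intro y
    have hfp := hFP y
    simp only [lap, dvg] at hfp
    rw [Finset.sum_add_distrib]
    linarith
  -- pointwise reductions of the divergence sums
  have s1 : ∀ y, ∑ i : Fin (k+1), pd i (fun z => m z * pd i u z) y
      = (∑ i : Fin (k+1), pd i u y * pd i m y) + m y * lap u y := by
    intro y
    calc ∑ i : Fin (k+1), pd i (fun z => m z * pd i u z) y
        = ∑ i : Fin (k+1), (pd i m y * pd i u y + m y * pd i (pd i u) y) :=
          Finset.sum_congr rfl (fun i _ => ed1 i y)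
      _ = (∑ i : Fin (k+1), pd i m y * pd i u y) + m y * ∑ i : Fin (k+1), pd i (pd i u) y := by
          rw [Finset.sum_add_distrib, Finset.mul_sum]
      _ = _ := by
          rw [Finset.sum_congr rfl (fun i _ => mul_comm (pd i m y) (pd i u y))]
          rfl
  have s2 : ∀ y, ∑ i : Fin (k+1),
      pd i (fun z => u z * (pd i m z + m z * (pd i u z + P i))) y
      = (∑ i : Fin (k+1), pd i u y * pd i m y)
        + m y * ((∑ i : Fin (k+1), (pd i u y)^2) + ∑ i : Fin (k+1), pd i u y * P i) := by
    intro y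
    have step1 : ∑ i : Fin (k+1),
        pd i (fun z => u z * (pd i m z + m z * (pd i u z + P i))) y
        = ∑ i : Fin (k+1), (pd i u y * (pd i m y + m y * (pd i u y + P i))
          + u y * (pd i (pd i m) y + pd i (fun z => m z * (pd i u z + P i)) y)) :=
      Finset.sum_congr rfl (fun i _ => by rw [e2a i y, e2b i y])
    rw [step1, Finset.sum_add_distrib, ← Finset.mul_sum, hFP' y, mul_zero, add_zero]
    have expand : ∀ i : Fin (k+1), pd i u y * (pd i m y + m y * (pd i u y + P i))
        = pd i u y * pd i m y + m y * ((pd i u y)^2 + pd i u y * P i) := fun i => by ring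
    rw [Finset.sum_congr rfl (fun i _ => expand i), Finset.sum_add_distrib, ← Finset.mul_sum,
      Finset.sum_add_distrib]
  have hB : ∀ y, (∑ i : Fin (k+1), (pd i u y + P i)^2)
      = (∑ i : Fin (k+1), (pd i u y)^2) + 2*(∑ i : Fin (k+1), pd i u y * P i)
        + ∑ i : Fin (k+1), (P i)^2 := by
    intro y
    have expand : ∀ i : Fin (k+1), (pd i u y + P i)^2
        = (pd i u y)^2 + (2*(pd i u y * P i) + (P i)^2) := fun i => by ring
    rw [Finset.sum_congr rfl (fun i _ => expand i), Finset.sum_add_distrib,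
      Finset.sum_add_distrib, Finset.mul_sum]
    ring
  -- the master pointwise identity
  have hstar : ∀ y,
      (∑ i, (pd i u y) ^ 2) / 2 * (m y + 1) + (m y - 1) * v y
        + (m y * Real.log (m y) - Real.log (m y))
      = -(∑ i : Fin (k+1), pd i (fun z => m z * pd i u z) y)
        + (∑ i : Fin (k+1), pd i (fun z => u z * (pd i m z + m z * (pd i u z + P i))) y)
        + lap u y
        + (m y - 1) * (∑ i : Fin (k+1), (P i)^2) / 2
        - (∑ i : Fin (k+1), pd i u y * P i)
        - (m y - 1) * H := by
    intro y
    rw [s1 y, s2 y]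
    linear_combination ((1 : ℝ) - m y) * (hHJB y) + ((m y - 1)/2) * hB y
  -- integrability of the pieces
  have iA : IntegrableOn (fun y => ∑ i : Fin (k+1), pd i (fun z => m z * pd i u z) y) Q :=
    hio (continuous_finset_sum _ fun i _ => pd_continuous (hGi1 i) i)
  have iB : IntegrableOn
      (fun y => ∑ i : Fin (k+1), pd i (fun z => u z * (pd i m z + m z * (pd i u z + P i))) y)
      Q := hio (continuous_finset_sum _ fun i _ => pd_continuous (hGi2cd i) i)
  have iC : IntegrableOn (lap u) Q := hio clap
  have iD : IntegrableOn (fun y => (m y - 1) * (∑ i : Fin (k+1), (P i)^2) / 2) Q :=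
    hio (((cm.sub continuous_const).mul continuous_const).div_const 2)
  have iE : IntegrableOn (fun y => ∑ i : Fin (k+1), pd i u y * P i) Q :=
    hio (continuous_finset_sum _ fun i _ => (cpdu i).mul continuous_const)
  have iF : IntegrableOn (fun y => (m y - 1) * H) Q := hio ((cm.sub continuous_const).mul continuous_const)
  have im1 : ∫ y in Q, (m y - 1) = 0 := by
    rw [integral_sub (hio cm) (hio continuous_const)]
    rw [setIntegral_const, measureReal_def, vol1, hmmean]
    simp
  -- the balance identity
  have balance : (∫ y in Q,
      ((∑ i, (pd i u y) ^ 2) / 2 * (m y + 1) + (m y - 1) * v y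
        + (m y * Real.log (m y) - Real.log (m y)))) = 0 := by
    have vA : ∫ y in Q, (∑ i : Fin (k+1), pd i (fun z => m z * pd i u z) y) = 0 := by
      rw [integral_finset_sum _ (fun i _ => hio (pd_continuous (hGi1 i) i))]
      exact Finset.sum_eq_zero fun i _ => hD1 i
    have vB : ∫ y in Q,
        (∑ i : Fin (k+1), pd i (fun z => u z * (pd i m z + m z * (pd i u z + P i))) y) = 0 := by
      rw [integral_finset_sum _ (fun i _ => hio (pd_continuous (hGi2cd i) i))]
      exact Finset.sum_eq_zero fun i _ => hD2 i
    have vD : ∫ y in Q, (m y - 1) * (∑ i : Fin (k+1), (P i)^2) / 2 = 0 := by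
      have e1 : ∫ y in Q, (m y - 1) * (∑ i : Fin (k+1), (P i)^2) / 2
          = ∫ y in Q, (m y - 1) * ((∑ i : Fin (k+1), (P i)^2) / 2) :=
        setIntegral_congr_fun hQm fun y _ => by ring
      rw [e1, integral_mul_const, im1, zero_mul]
    have vE : ∫ y in Q, (∑ i : Fin (k+1), pd i u y * P i) = 0 := by
      rw [integral_finset_sum _ (fun i _ => hio (f := fun y => pd i u y * P i) ((cpdu i).mul continuous_const))]
      refine Finset.sum_eq_zero fun i _ => ?_
      rw [integral_mul_const, h1 i, zero_mul]
    have vF : ∫ y in Q, (m y - 1) * H = 0 := by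
      rw [integral_mul_const, im1, zero_mul]
    have jN : IntegrableOn
        (fun y => -(∑ i : Fin (k+1), pd i (fun z => m z * pd i u z) y)) Q := iA.neg
    have j2 : IntegrableOn (fun y =>
        -(∑ i : Fin (k+1), pd i (fun z => m z * pd i u z) y)
        + (∑ i : Fin (k+1), pd i (fun z => u z * (pd i m z + m z * (pd i u z + P i))) y)) Q :=
      jN.add iB
    have j3 : IntegrableOn (fun y =>
        -(∑ i : Fin (k+1), pd i (fun z => m z * pd i u z) y)
        + (∑ i : Fin (k+1), pd i (fun z => u z * (pd i m z + m z * (pd i u z + P i))) y)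
        + lap u y) Q := j2.add iC
    have j4 : IntegrableOn (fun y =>
        -(∑ i : Fin (k+1), pd i (fun z => m z * pd i u z) y)
        + (∑ i : Fin (k+1), pd i (fun z => u z * (pd i m z + m z * (pd i u z + P i))) y)
        + lap u y + (m y - 1) * (∑ i : Fin (k+1), (P i)^2) / 2) Q := j3.add iD
    have j5 : IntegrableOn (fun y =>
        -(∑ i : Fin (k+1), pd i (fun z => m z * pd i u z) y)
        + (∑ i : Fin (k+1), pd i (fun z => u z * (pd i m z + m z * (pd i u z + P i))) y)
        + lap u y + (m y - 1) * (∑ i : Fin (k+1), (P i)^2) / 2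
        - (∑ i : Fin (k+1), pd i u y * P i)) Q := j4.sub iE
    rw [setIntegral_congr_fun hQm (fun y _ => hstar y),
      integral_sub j5 iF,
      integral_sub j4 iE,
      integral_add j3 iD,
      integral_add j2 iC,
      integral_add jN iB, integral_neg,
      vA, vB, vD, vE, vF, h2]
    ring
  refine ⟨balance, ?_⟩
  have iS2 : IntegrableOn (fun y => (∑ i : Fin (k+1), (pd i u y)^2)/2 * (m y + 1)) Q :=
    hio (((continuous_finset_sum _ fun i _ => (cpdu i).pow 2).div_const 2).mul
      (cm.add continuous_const))
  have iMV : IntegrableOn (fun y => (m y - 1) * v y) Q := hio ((cm.sub continuous_const).mul cv)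
  have iML : IntegrableOn (fun y => m y * Real.log (m y) - Real.log (m y)) Q :=
    hio ((cm.mul clog).sub clog)
  have jSM : IntegrableOn (fun y =>
      (∑ i : Fin (k+1), (pd i u y)^2)/2 * (m y + 1) + (m y - 1) * v y) Q := iS2.add iMV
  rw [integral_add jSM iML, integral_add iS2 iMV] at balance
  have hml : 0 ≤ ∫ y in Q, (m y * Real.log (m y) - Real.log (m y)) := by
    refine setIntegral_nonneg hQm fun y _ => ?_
    have hm0 := hmpos y
    rcases le_or_gt 1 (m y) with h1' | h1'
    · have hl := Real.log_nonneg h1'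
      nlinarith
    · have hl := Real.log_nonpos hm0.le h1'.le
      nlinarith
  have hmv : ∫ y in Q, (m y - 1) * v y = (∫ y in Q, m y * v y) - ∫ y in Q, v y := by
    rw [← integral_sub (hio (f := fun y => m y * v y) (cm.mul cv)) (hio cv)]
    exact setIntegral_congr_fun hQm fun y _ => by ring
  have hmv0 : 0 ≤ ∫ y in Q, m y * v y :=
    setIntegral_nonneg hQm fun y _ => mul_nonneg (hmpos y).le (hv0 y)
  linarith
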